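/- For f = x^2 + y^2 + z^2 ∈ C[x,y,z] and g = x, the generalized Bernstein–Sato polynomial satisfies: there exists P ∈ D_X⟨σ⟩ with (σ+1)(σ+5/2) · x f^s = P · x f f^s, i.e., (s+1)(s+5/2) lies in the generalized Bernstein–Sato ideal of f at g = x; moreover (s+1) alone already satisfies the 1-generalized (m=1) functional equation b(σ) x f^s = Σ_k P_k h_k f^s with h_k ∈ ⟨f⟩. -/

import Mathlib

/-!
In the model `N_f = S[s] fˢ`, `S = ℂ[x,y,z][f⁻¹]` (the polynomial variable `X` plays `s`),
`σ = -∂ₜ t` is multiplication by `s` and `∂ᵢ (a fˢ) = (∂ᵢ a + s a ∂ᵢf / f) fˢ`. On multiples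
of `f` this is the chain rule `∂ᵢ (r f^{s+1}) = (f ∂ᵢ r + (s + 1) r ∂ᵢ f) fˢ`, with no `f⁻¹` left.
For `f = ∑ xⱼ²` it gives `∂ₓ (f^{s+1}) = 2 (s + 1) x fˢ` and, applied twice and summed,
`Δ (x f^{s+1}) = (s + 1)(4 s + 10) x fˢ`, so `P = ∂ₓ / 2` and `P = Δ / 4` work.
-/

open Polynomial

theorem sigma_apply_eq_X_mul {R S : Type*} [Semiring R] [CommRing S] [Module R S]
    {u v : S} (huv : u * v = 1) {t dt : Module.End R S[X]}
    (ht : ∀ h : S[X], t h = C u * aeval (X + 1) h)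
    (hdt : ∀ h : S[X], dt h = -(X * C v * aeval (X - 1) h)) (h : S[X]) :
    (-(dt * t)) h = X * h := by
  have hshift : aeval (X - 1 : S[X]) (aeval (X + 1 : S[X]) h) = h := by
    rw [← aeval_algHom_apply]; simp
  have hCuv : C u * C v = 1 := by rw [← C_mul, huv, C_1]
  rw [LinearMap.neg_apply, Module.End.mul_apply, ht, hdt, map_mul, aeval_C, hshift,
    algebraMap_eq]
  linear_combination X * h * hCuv

section TwistedPartial

open MvPolynomial (pderiv)

variable {ι k R S : Type*} [CommRing k] [CommRing S] [Semiring R] [Module R S]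

/-- `d` is `∂ᵢ` acting on `N_f = S[s] fˢ`, where `v = f⁻¹`. -/
def IsTwistedPartial (A : MvPolynomial ι k →+* S) (f : MvPolynomial ι k) (v : S) (i : ι)
    (d : Module.End R S[X]) : Prop :=
  ∀ (r : MvPolynomial ι k) (m : ℕ),
    d (C (A r) * X ^ m) =
      C (A (pderiv i r)) * X ^ m + X * C (A (pderiv i f) * v) * (C (A r) * X ^ m)

variable {A : MvPolynomial ι k →+* S} {f : MvPolynomial ι k} {v : S} {i : ι}
  {d : Module.End R S[X]}

theorem IsTwistedPartial.apply_mul_self (hd : IsTwistedPartial A f v i d) (hv : A f * v = 1)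
    (r : MvPolynomial ι k) (m : ℕ) :
    d (C (A (r * f)) * X ^ m) =
      (C (A (pderiv i r * f)) + (X + 1) * C (A (r * pderiv i f))) * X ^ m := by
  have hCv : C (A f) * C v = 1 := by rw [← C_mul, hv, C_1]
  rw [hd, Derivation.leibniz]
  simp only [smul_eq_mul, map_add, map_mul]
  linear_combination X * C (A r) * C (A (pderiv i f)) * X ^ m * hCv

theorem IsTwistedPartial.apply_apply_mul_self (hd : IsTwistedPartial A f v i d)
    (hv : A f * v = 1) (r : MvPolynomial ι k) :
    d (d (C (A (r * f)))) =
      C (A (pderiv i (pderiv i r) * f)) + (X + 1) * C (A (pderiv i r * pderiv i f))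
        + (X + 1) * (C (A (pderiv i (r * pderiv i f)))
          + X * C (A (pderiv i f ^ 2 * r) * v)) := by
  have h0 := hd.apply_mul_self hv r 0
  simp only [pow_zero, mul_one] at h0
  set b := r * pderiv i f
  rw [h0, show C (A (pderiv i r * f)) + (X + 1) * C (A b)
      = C (A (pderiv i r * f)) * X ^ 0 + (C (A b) * X ^ 1 + C (A b) * X ^ 0) by ring,
    map_add, map_add, hd.apply_mul_self hv, hd, hd]
  simp only [b, map_mul, map_pow]
  ring

variable [Fintype ι]

theorem pderiv_sum_X_sq (i : ι) :
    pderiv i (∑ j, MvPolynomial.X j ^ 2 : MvPolynomial ι k) = 2 * MvPolynomial.X i := by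
  classical
  simp [MvPolynomial.pderiv_X, Pi.single_apply]

theorem IsTwistedPartial.apply_sum_X_sq
    (hd : IsTwistedPartial A (∑ j, MvPolynomial.X j ^ 2) v i d)
    (hv : A (∑ j, MvPolynomial.X j ^ 2) * v = 1) :
    d (C (A (∑ j, MvPolynomial.X j ^ 2))) = 2 * (X + 1) * C (A (MvPolynomial.X i)) := by
  have h := hd.apply_mul_self hv 1 0
  simp only [one_mul, pow_zero, mul_one, pderiv_sum_X_sq, Derivation.map_one_eq_zero,
    zero_mul, map_zero, zero_add, map_mul, map_ofNat] at h
  rw [h]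
  ring

theorem sum_twistedPartial_apply_apply_X_mul_sum_X_sq {d : ι → Module.End R S[X]}
    (hd : ∀ i, IsTwistedPartial A (∑ j, MvPolynomial.X j ^ 2) v i (d i))
    (hv : A (∑ j, MvPolynomial.X j ^ 2) * v = 1) (a : ι) :
    ∑ i, d i (d i (C (A (MvPolynomial.X a * ∑ j, MvPolynomial.X j ^ 2)))) =
      (X + 1) * (4 * X + 2 * (Fintype.card ι : S[X]) + 4) * C (A (MvPolynomial.X a)) := by
  classical
  simp only [fun i => (hd i).apply_apply_mul_self hv, pderiv_sum_X_sq,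
    map_mul (C : S →+* S[X]) _ v]
  simp only [Finset.sum_add_distrib, ← Finset.mul_sum, ← Finset.sum_mul, ← map_sum]
  have hpderiv_two : ∀ i, pderiv i (2 : MvPolynomial ι k) = 0 :=
    fun i => (pderiv i).map_natCast 2
  have hsecond : ∑ i, pderiv i (pderiv i (MvPolynomial.X a : MvPolynomial ι k)) = 0 := by
    simp [MvPolynomial.pderiv_X, Pi.single_apply, apply_ite]
  have hgrad : ∑ i, pderiv i (MvPolynomial.X a) * (2 * MvPolynomial.X i : MvPolynomial ι k)
      = 2 * MvPolynomial.X a := by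
    simp [MvPolynomial.pderiv_X, Pi.single_apply]
  have hdiv : ∑ i, pderiv i (MvPolynomial.X a * (2 * MvPolynomial.X i) : MvPolynomial ι k)
      = (2 * (Fintype.card ι : MvPolynomial ι k) + 2) * MvPolynomial.X a := by
    simp [MvPolynomial.pderiv_X, Pi.single_apply, Finset.sum_add_distrib, hpderiv_two]
    ring
  have hnorm : ∑ i, (2 * MvPolynomial.X i) ^ 2
      = 4 * ∑ j, (MvPolynomial.X j ^ 2 : MvPolynomial ι k) := by
    rw [Finset.mul_sum]
    exact Finset.sum_congr rfl fun i _ => by ring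
  have hCv : C (A (∑ j, MvPolynomial.X j ^ 2)) * C v = 1 := by rw [← C_mul, hv, C_1]
  rw [hsecond, hgrad, hdiv, hnorm]
  simp only [map_mul, map_add, map_ofNat, map_natCast, zero_mul, map_zero]
  linear_combination 4 * X * (X + 1) * C (A (MvPolynomial.X a)) * hCv

end TwistedPartial

theorem generalB_example_general (f : MvPolynomial (Fin 3) ℂ)
    (hfdef : f = MvPolynomial.X 0 ^ 2 + MvPolynomial.X 1 ^ 2 + MvPolynomial.X 2 ^ 2)
    (S : Type*) [CommRing S] [Algebra (MvPolynomial (Fin 3) ℂ) S] [Algebra ℂ S]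
    [IsLocalization.Away f S]
    (D : Fin 3 → Derivation ℂ S S)
    (hD : ∀ i (r : MvPolynomial (Fin 3) ℂ),
      D i (algebraMap (MvPolynomial (Fin 3) ℂ) S r)
        = algebraMap (MvPolynomial (Fin 3) ℂ) S (MvPolynomial.pderiv i r))
    (t : Module.End ℂ (Polynomial S))
    (ht : ∀ h : Polynomial S,
      t h = Polynomial.C (algebraMap (MvPolynomial (Fin 3) ℂ) S f) *
        (Polynomial.aeval (Polynomial.X + 1) h))
    (dt : Module.End ℂ (Polynomial S))
    (hdt : ∀ h : Polynomial S,
      dt h = -(Polynomial.X * Polynomial.C (IsLocalization.Away.invSelf (S := S) f) *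
        (Polynomial.aeval (Polynomial.X - 1) h)))
    (xOp : Fin 3 → Module.End ℂ (Polynomial S))
    (dx : Fin 3 → Module.End ℂ (Polynomial S))
    (hdx : ∀ i (a : S) (m : ℕ),
      dx i (Polynomial.C a * Polynomial.X ^ m)
        = Polynomial.C (D i a) * Polynomial.X ^ m
          + Polynomial.X *
            Polynomial.C (algebraMap (MvPolynomial (Fin 3) ℂ) S (MvPolynomial.pderiv i f) *
              IsLocalization.Away.invSelf (S := S) f) *
            (Polynomial.C a * Polynomial.X ^ m)) :
    -- (σ+1)(σ+5/2) · (x fˢ) = P (x f fˢ) for some P ∈ D_X⟨σ⟩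
    (∃ P ∈ Algebra.adjoin ℂ
        ({Q | ∃ i : Fin 3, Q = xOp i ∨ Q = dx i} ∪ {-(dt * t)}),
      ((-(dt * t) + 1) * (-(dt * t) + (5/2 : ℂ) • 1))
          (Polynomial.C (algebraMap (MvPolynomial (Fin 3) ℂ) S (MvPolynomial.X 0)))
        = P (Polynomial.C (algebraMap (MvPolynomial (Fin 3) ℂ) S (MvPolynomial.X 0 * f)))) ∧
    -- (σ+1) · (x fˢ) = P (h fˢ) for some P ∈ D_X⟨σ⟩ and h ∈ ⟨f⟩ (the m = 1 equation)
    (∃ P ∈ Algebra.adjoin ℂ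
        ({Q | ∃ i : Fin 3, Q = xOp i ∨ Q = dx i} ∪ {-(dt * t)}),
      ∃ h ∈ Ideal.span {f},
      (-(dt * t) + 1)
          (Polynomial.C (algebraMap (MvPolynomial (Fin 3) ℂ) S (MvPolynomial.X 0)))
        = P (Polynomial.C (algebraMap (MvPolynomial (Fin 3) ℂ) S h))) := by
  have hv := IsLocalization.Away.mul_invSelf (S := S) f
  have hd : ∀ i, IsTwistedPartial (algebraMap _ S) f (IsLocalization.Away.invSelf f) i (dx i) :=
    fun i r m => by rw [hdx, hD]
  obtain rfl : f = ∑ j, MvPolynomial.X j ^ 2 := by rw [hfdef, Fin.sum_univ_three]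
  have hσ := sigma_apply_eq_X_mul hv ht hdt
  have hdx_mem : ∀ i, dx i ∈ Algebra.adjoin ℂ
      ({Q | ∃ i : Fin 3, Q = xOp i ∨ Q = dx i} ∪ {-(dt * t)}) :=
    fun i => Algebra.subset_adjoin (Set.mem_union_left _ ⟨i, Or.inr rfl⟩)
  set x := C (algebraMap (MvPolynomial (Fin 3) ℂ) S (MvPolynomial.X 0))
  constructor
  · refine ⟨(1/4 : ℂ) • ∑ i, dx i * dx i,
      Subalgebra.smul_mem _
        (Subalgebra.sum_mem _ fun i _ => mul_mem (hdx_mem i) (hdx_mem i)) _, ?_⟩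
    simp only [LinearMap.smul_apply, LinearMap.sum_apply, Module.End.mul_apply,
      LinearMap.add_apply, Module.End.one_apply, hσ,
      sum_twistedPartial_apply_apply_X_mul_sum_X_sq hd hv, Fintype.card_fin]
    simp only [Algebra.smul_def]
    have h4 : algebraMap ℂ S[X] (1/4) * 4 = 1 := by
      rw [← map_ofNat (algebraMap ℂ S[X]), ← map_mul]; norm_num
    have h10 : algebraMap ℂ S[X] (5/2) = algebraMap ℂ S[X] (1/4) * 10 := by
      rw [← map_ofNat (algebraMap ℂ S[X]), ← map_mul]; norm_num
    linear_combination (-(X ^ 2 * x + X * x)) * h4 + (X * x + x) * h10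
  · refine ⟨(1/2 : ℂ) • dx 0, Subalgebra.smul_mem _ (hdx_mem 0) _, _,
      Ideal.mem_span_singleton_self _, ?_⟩
    simp only [LinearMap.smul_apply, LinearMap.add_apply, Module.End.one_apply, hσ,
      (hd 0).apply_sum_X_sq hv]
    simp only [Algebra.smul_def]
    have h2 : algebraMap ℂ S[X] (1/2) * 2 = 1 := by
      rw [← map_ofNat (algebraMap ℂ S[X]), ← map_mul]; norm_num
    linear_combination (-(X + 1) * x) * h2

theorem generalB_example (f : MvPolynomial (Fin 3) ℂ)
    (hfdef : f = MvPolynomial.X 0 ^ 2 + MvPolynomial.X 1 ^ 2 + MvPolynomial.X 2 ^ 2)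
    (S : Type*) [CommRing S] [Algebra (MvPolynomial (Fin 3) ℂ) S] [Algebra ℂ S]
    [IsScalarTower ℂ (MvPolynomial (Fin 3) ℂ) S]
    [IsLocalization.Away f S]
    (D : Fin 3 → Derivation ℂ S S)
    (hD : ∀ i (r : MvPolynomial (Fin 3) ℂ),
      D i (algebraMap (MvPolynomial (Fin 3) ℂ) S r)
        = algebraMap (MvPolynomial (Fin 3) ℂ) S (MvPolynomial.pderiv i r))
    (t : Module.End ℂ (Polynomial S))
    (ht : ∀ h : Polynomial S,
      t h = Polynomial.C (algebraMap (MvPolynomial (Fin 3) ℂ) S f) *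
        (Polynomial.aeval (Polynomial.X + 1) h))
    (dt : Module.End ℂ (Polynomial S))
    (hdt : ∀ h : Polynomial S,
      dt h = -(Polynomial.X * Polynomial.C (IsLocalization.Away.invSelf (S := S) f) *
        (Polynomial.aeval (Polynomial.X - 1) h)))
    (xOp : Fin 3 → Module.End ℂ (Polynomial S))
    (hx : ∀ i (h : Polynomial S),
      xOp i h = Polynomial.C (algebraMap (MvPolynomial (Fin 3) ℂ) S (MvPolynomial.X i)) * h)
    (dx : Fin 3 → Module.End ℂ (Polynomial S))
    (hdx : ∀ i (a : S) (m : ℕ),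
      dx i (Polynomial.C a * Polynomial.X ^ m)
        = Polynomial.C (D i a) * Polynomial.X ^ m
          + Polynomial.X *
            Polynomial.C (algebraMap (MvPolynomial (Fin 3) ℂ) S (MvPolynomial.pderiv i f) *
              IsLocalization.Away.invSelf (S := S) f) *
            (Polynomial.C a * Polynomial.X ^ m)) :
    -- (σ+1)(σ+5/2) · (x fˢ) = P (x f fˢ) for some P ∈ D_X⟨σ⟩
    (∃ P ∈ Algebra.adjoin ℂ
        ({Q | ∃ i : Fin 3, Q = xOp i ∨ Q = dx i} ∪ {-(dt * t)}),
      ((-(dt * t) + 1) * (-(dt * t) + (5/2 : ℂ) • 1))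
          (Polynomial.C (algebraMap (MvPolynomial (Fin 3) ℂ) S (MvPolynomial.X 0)))
        = P (Polynomial.C (algebraMap (MvPolynomial (Fin 3) ℂ) S (MvPolynomial.X 0 * f)))) ∧
    -- (σ+1) · (x fˢ) = P (h fˢ) for some P ∈ D_X⟨σ⟩ and h ∈ ⟨f⟩ (the m = 1 equation)
    (∃ P ∈ Algebra.adjoin ℂ
        ({Q | ∃ i : Fin 3, Q = xOp i ∨ Q = dx i} ∪ {-(dt * t)}),
      ∃ h ∈ Ideal.span {f},
      (-(dt * t) + 1)
          (Polynomial.C (algebraMap (MvPolynomial (Fin 3) ℂ) S (MvPolynomial.X 0)))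
        = P (Polynomial.C (algebraMap (MvPolynomial (Fin 3) ℂ) S h))) :=
  generalB_example_general f hfdef S D hD t ht dt hdt xOp dx hdx
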